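/- arXiv:1304.6778 — 13 statements merged into one kernel-verified Lean document; each statement's English description precedes it below -/
import Mathlib

section
/- Let a and b be integers with |a| > 1, |b| > 1 and gcd(a, b) = 1. Let x be the unique integer strictly between 0 and b (i.e., 1 ≤ x ≤ b − 1 if b > 1, and b + 1 ≤ x ≤ −1 if b < −1) such that a·x ≡ 1 (mod b), and let y be the unique integer strictly between 0 and a (i.e., 1 ≤ y ≤ a − 1 if a > 1, and a + 1 ≤ y ≤ −1 if a < −1) such that b·y ≡ 1 (mod a). Then a·x + b·y = 1 + a·b. -/
/-!
Both `a * x` and `b * y` lie strictly between `0` and `a * b`, and by the Chinese remainder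
theorem `a * x + b * y ≡ 1 [ZMOD a * b]`. A sum of two integers strictly between `0` and `a * b`
lies strictly between `1` and `1 + 2 * a * b`, so it can only be `1 + a * b`.
-/

/-- Sign-agnostic form of "`u` lies strictly between `0` and `m`": `u / m ∈ (0, 1)`. -/
def Int.StrictlyBetweenZero (m u : ℤ) : Prop := 0 < u * m ∧ u * m < m * m

namespace Int.StrictlyBetweenZero

theorem of_bounds {m u : ℤ} (hm : 1 < |m|) (hpos : 1 < m → 1 ≤ u ∧ u ≤ m - 1)
    (hneg : m < -1 → m + 1 ≤ u ∧ u ≤ -1) : StrictlyBetweenZero m u := by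
  rcases lt_abs.mp hm with hm | hm
  · obtain ⟨hu₁, hu₂⟩ := hpos hm
    constructor <;> nlinarith
  · obtain ⟨hu₁, hu₂⟩ := hneg (by linarith)
    constructor <;> nlinarith

theorem mul_left {m u : ℤ} (h : StrictlyBetweenZero m u) {c : ℤ} (hc : c ≠ 0) :
    StrictlyBetweenZero (c * m) (c * u) := by
  have hc2 : 0 < c * c := mul_self_pos.mpr hc
  obtain ⟨h₁, h₂⟩ := h
  constructor <;> nlinarith

theorem add_eq_one_add_of_modEq {m u v : ℤ} (hu : StrictlyBetweenZero m u)
    (hv : StrictlyBetweenZero m v) (h : u + v ≡ 1 [ZMOD m]) : u + v = 1 + m := by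
  obtain ⟨k, hk⟩ := h.symm.dvd
  obtain ⟨hu₁, hu₂⟩ := hu
  obtain ⟨hv₁, hv₂⟩ := hv
  suffices k = 1 by subst k; linarith
  rcases lt_or_gt_of_ne (show m ≠ 0 by rintro rfl; simp at hu₁) with hm | hm
  · have : m < u ∧ u < 0 := ⟨by nlinarith, by nlinarith⟩
    have : m < v ∧ v < 0 := ⟨by nlinarith, by nlinarith⟩
    nlinarith
  · have : 0 < u ∧ u < m := ⟨by nlinarith, by nlinarith⟩
    have : 0 < v ∧ v < m := ⟨by nlinarith, by nlinarith⟩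
    nlinarith

end Int.StrictlyBetweenZero

theorem reciprocity_formula_main_case
    (a b x y : ℤ)
    (ha : 1 < |a|) (hb : 1 < |b|) (hab : Int.gcd a b = 1)
    (hx_pos : 1 < b → 1 ≤ x ∧ x ≤ b - 1)
    (hx_neg : b < -1 → b + 1 ≤ x ∧ x ≤ -1)
    (hx : a * x ≡ 1 [ZMOD b])
    (hy_pos : 1 < a → 1 ≤ y ∧ y ≤ a - 1)
    (hy_neg : a < -1 → a + 1 ≤ y ∧ y ≤ -1)
    (hy : b * y ≡ 1 [ZMOD a]) :
    a * x + b * y = 1 + a * b := by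
  have ha₀ : a ≠ 0 := abs_pos.mp (by linarith)
  have hb₀ : b ≠ 0 := abs_pos.mp (by linarith)
  have hax : Int.StrictlyBetweenZero (a * b) (a * x) :=
    (Int.StrictlyBetweenZero.of_bounds hb hx_pos hx_neg).mul_left ha₀
  have hby : Int.StrictlyBetweenZero (a * b) (b * y) := by
    rw [mul_comm a b]
    exact (Int.StrictlyBetweenZero.of_bounds ha hy_pos hy_neg).mul_left hb₀
  have hmod_a : a * x + b * y ≡ 1 [ZMOD a] :=
    (Int.add_modEq_right_iff.mpr (dvd_mul_right a x)).trans hy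
  have hmod_b : a * x + b * y ≡ 1 [ZMOD b] :=
    (Int.add_modEq_left_iff.mpr (dvd_mul_right b y)).trans hx
  exact hax.add_eq_one_add_of_modEq hby
    ((Int.modEq_and_modEq_iff_modEq_mul hab).mp ⟨hmod_a, hmod_b⟩)
end

section
/- Let a, b, k, x, y be integers satisfying a·y + b·x = 1 + a·b. Then a·(k·x − (b − y)) = 1 + x·(k·a − b); in particular a·(k·x − (b − y)) ≡ 1 (mod k·a − b), so that k·x − (b − y) represents the modular inverse of a modulo k·a − b. -/
theorem mul_sub_eq_one_add_mul_of_reciprocity {R : Type*} [CommRing R] {a b x y : R}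
    (h : a * y + b * x = 1 + a * b) (k : R) :
    a * (k * x - (b - y)) = 1 + x * (k * a - b) := by
  linear_combination h

theorem inverse_mod_ka_sub_b
    (a b k x y : ℤ) (h : a * y + b * x = 1 + a * b) :
    a * (k * x - (b - y)) = 1 + x * (k * a - b) ∧
    a * (k * x - (b - y)) ≡ 1 [ZMOD k * a - b] := by
  have heq := mul_sub_eq_one_add_mul_of_reciprocity h k
  refine ⟨heq, ?_⟩
  rw [heq]
  exact Int.add_modEq_left_iff.mpr (dvd_mul_left _ x)
end

section
/- Let a, b, k, x, y be integers with a > 1, b > 1, k ≥ 0, 1 ≤ x ≤ a − 1, 1 ≤ y ≤ b − 1, and a·y + b·x = 1 + a·b. Then the integer z = k·(a − x) + y satisfies 1 ≤ z ≤ k·a + b − 1 and a·z ≡ 1 (mod k·a + b); that is, z is the modular inverse of a modulo k·a + b. -/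
/-! The reciprocity relation makes `a (k (a - x) + y) - 1 = (k a + b) (a - x)`. -/

theorem Int.mul_modEq_one_of_reciprocity {a b x y : ℤ} (k : ℤ) (h : a * y + b * x = 1 + a * b) :
    a * (k * (a - x) + y) ≡ 1 [ZMOD k * a + b] :=
  (Int.modEq_iff_dvd.2 ⟨a - x, by linear_combination h⟩).symm

theorem inverse_mod_ka_add_b_in_range_general
    (a b k x y : ℤ)
    (hk : 0 ≤ k)
    (hx : 1 ≤ x ∧ x ≤ a - 1) (hy : 1 ≤ y ∧ y ≤ b - 1)
    (h : a * y + b * x = 1 + a * b) :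
    1 ≤ k * (a - x) + y ∧ k * (a - x) + y ≤ k * a + b - 1 ∧
    a * (k * (a - x) + y) ≡ 1 [ZMOD k * a + b] := by
  obtain ⟨hx_pos, hx_le⟩ := hx
  obtain ⟨hy_pos, hy_le⟩ := hy
  have hkax : 0 ≤ k * (a - x) := mul_nonneg hk (by linarith)
  have hkx : 0 ≤ k * x := mul_nonneg hk (by linarith)
  refine ⟨by linarith, by linarith, Int.mul_modEq_one_of_reciprocity k h⟩

theorem inverse_mod_ka_add_b_in_range
    (a b k x y : ℤ)
    (ha : 1 < a) (hb : 1 < b) (hk : 0 ≤ k)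
    (hx : 1 ≤ x ∧ x ≤ a - 1) (hy : 1 ≤ y ∧ y ≤ b - 1)
    (h : a * y + b * x = 1 + a * b) :
    1 ≤ k * (a - x) + y ∧ k * (a - x) + y ≤ k * a + b - 1 ∧
    a * (k * (a - x) + y) ≡ 1 [ZMOD k * a + b] :=
  inverse_mod_ka_add_b_in_range_general a b k x y hk hx hy h
end

section
/- Let a, b, x, y be integers satisfying a·y + b·x = 1 + a·b. Then in the Gaussian integers ℤ[i], a·(y + i·(a − x)) = 1 + (a − x)·(a·i + b); in particular a·(y + i·(a − x)) ≡ 1 (mod a·i + b) in ℤ[i], so the modular inverse of a modulo a·i + b is y + i·(a − x). -/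
theorem inverse_mod_gaussian_ai_add_b
    (a b x y : ℤ) (h : a * y + b * x = 1 + a * b) :
    (a : GaussianInt) * ((y : GaussianInt) + Zsqrtd.sqrtd * ((a : GaussianInt) - (x : GaussianInt))) =
      1 + ((a : GaussianInt) - (x : GaussianInt)) *
        ((a : GaussianInt) * Zsqrtd.sqrtd + (b : GaussianInt)) ∧
    ((a : GaussianInt) * Zsqrtd.sqrtd + (b : GaussianInt)) ∣
      ((a : GaussianInt) * ((y : GaussianInt) + Zsqrtd.sqrtd * ((a : GaussianInt) - (x : GaussianInt))) - 1) := by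
  have hsq : (Zsqrtd.sqrtd : GaussianInt) * Zsqrtd.sqrtd = -1 := by
    ext <;> simp [Zsqrtd.re_mul, Zsqrtd.im_mul]
  have hZ : (a : GaussianInt) * y + b * x = 1 + a * b := by exact_mod_cast h
  have key : (a : GaussianInt) * ((y : GaussianInt) + Zsqrtd.sqrtd * ((a : GaussianInt) - (x : GaussianInt))) =
      1 + ((a : GaussianInt) - (x : GaussianInt)) *
        ((a : GaussianInt) * Zsqrtd.sqrtd + (b : GaussianInt)) := by
    linear_combination hZ
  exact ⟨key, ⟨(a : GaussianInt) - (x : GaussianInt), by rw [key]; ring⟩⟩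
end

section
/- Let a, b, c, d, p, q, r, s be integers satisfying a·p + b·q = 1 + a·b and c·r + d·s = 1 + c·d, and set u = a·c + b·d. Then (a·s + b·(d − r))·(c·(a − q) + d·p) = 1 + u·(p·(d − r) + s·(a − q)); in particular the product (a·s + b·(d − r))·(c·(a − q) + d·p) ≡ 1 (mod u). -/
theorem reciprocity_product_eq {R : Type*} [CommRing R] {a b c d p q r s : R}
    (hab : a * p + b * q = 1 + a * b) (hcd : c * r + d * s = 1 + c * d) :
    (a * s + b * (d - r)) * (c * (a - q) + d * p) =
      1 + (a * c + b * d) * (p * (d - r) + s * (a - q)) := by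
  -- the coefficient `c * r + d * s - c * d` of `hab` equals `1` by `hcd`
  linear_combination (c * r + d * s - c * d) * hab + hcd

theorem product_identity_x1_y1
    (a b c d p q r s : ℤ)
    (hab : a * p + b * q = 1 + a * b)
    (hcd : c * r + d * s = 1 + c * d) :
    (a * s + b * (d - r)) * (c * (a - q) + d * p) =
      1 + (a * c + b * d) * (p * (d - r) + s * (a - q)) ∧
    (a * s + b * (d - r)) * (c * (a - q) + d * p) ≡ 1 [ZMOD a * c + b * d] := by
  have key := reciprocity_product_eq hab hcd
  refine ⟨key, ?_⟩
  rw [key]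
  exact Int.add_mul_emod_self_left 1 _ _
end

section
/- Let a, b, c, d, p, q, r, s be integers satisfying a·p + b·q = 1 + a·b and c·r + d·s = 1 + c·d, and set u = a·c + b·d. Then (a·(c − s) + b·r)·(c·q + d·(b − p)) = 1 + u·(q·(c − s) + r·(b − p)); in particular the product (a·(c − s) + b·r)·(c·q + d·(b − p)) ≡ 1 (mod u). -/
/-!
With `X`, `Y` the two factors of the product and `K` the cofactor of `u`, the polynomial
`X * Y - u * K` factors as `(ap + bq - ab) * (cr + ds - cd)`, and each
reciprocity relation makes one of these factors equal to `1`.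
-/

theorem reciprocity_product_sub_mul {R : Type*} [CommRing R] (a b c d p q r s : R) :
    (a * (c - s) + b * r) * (c * q + d * (b - p)) -
        (a * c + b * d) * (q * (c - s) + r * (b - p)) =
      (a * p + b * q - a * b) * (c * r + d * s - c * d) := by
  ring

theorem product_identity_x2_y2
    (a b c d p q r s : ℤ)
    (hab : a * p + b * q = 1 + a * b)
    (hcd : c * r + d * s = 1 + c * d) :
    (a * (c - s) + b * r) * (c * q + d * (b - p)) =
      1 + (a * c + b * d) * (q * (c - s) + r * (b - p)) ∧
    (a * (c - s) + b * r) * (c * q + d * (b - p)) ≡ 1 [ZMOD a * c + b * d] := by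
  have key : (a * (c - s) + b * r) * (c * q + d * (b - p)) =
      1 + (a * c + b * d) * (q * (c - s) + r * (b - p)) := by
    calc (a * (c - s) + b * r) * (c * q + d * (b - p))
        = (a * p + b * q - a * b) * (c * r + d * s - c * d) +
            (a * c + b * d) * (q * (c - s) + r * (b - p)) := by
          rw [← reciprocity_product_sub_mul]; ring
      _ = 1 + (a * c + b * d) * (q * (c - s) + r * (b - p)) := by
          rw [hab, hcd]; ring
  refine ⟨key, ?_⟩
  rw [key]
  exact Int.modEq_add_fac_self
end

section
/- Let a, b, c, d, p, q, r, s be integers satisfying a·p + b·q = 1 + a·b and c·r + d·s = 1 + c·d, and set v = a·d − b·c. Then (a·(d − r) − b·s)·(c·(b − p) − d·q) = 1 − v·(q·(d − r) − s·(b − p)); in particular the product (a·(d − r) − b·s)·(c·(b − p) − d·q) ≡ 1 (mod v). -/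
/-! The identity holds in every commutative ring: the difference of its two sides is
`(ap + bq - 1 - ab)(cr + ds - cd) + (cr + ds - 1 - cd)`, which vanishes under the two relations. -/

theorem reciprocity_product_eq_one_sub {R : Type*} [CommRing R] {a b c d p q r s : R}
    (hab : a * p + b * q = 1 + a * b) (hcd : c * r + d * s = 1 + c * d) :
    (a * (d - r) - b * s) * (c * (b - p) - d * q) =
      1 - (a * d - b * c) * (q * (d - r) - s * (b - p)) := by
  linear_combination (c * r + d * s - c * d) * hab + hcd

theorem product_identity_x3_y3
    (a b c d p q r s : ℤ)
    (hab : a * p + b * q = 1 + a * b)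
    (hcd : c * r + d * s = 1 + c * d) :
    (a * (d - r) - b * s) * (c * (b - p) - d * q) =
      1 - (a * d - b * c) * (q * (d - r) - s * (b - p)) ∧
    (a * (d - r) - b * s) * (c * (b - p) - d * q) ≡ 1 [ZMOD a * d - b * c] := by
  have h := reciprocity_product_eq_one_sub hab hcd
  refine ⟨h, ?_⟩
  rw [h, Int.modEq_iff_dvd, sub_sub_cancel]
  exact dvd_mul_right _ _
end

section
/- Let a, b, c, d, p, q, r, s be integers satisfying a·p + b·q = 1 + a·b and c·r + d·s = 1 + c·d, and set v = a·d − b·c. Then (a·r − b·(c − s))·(c·p − d·(a − q)) ≡ 1 (mod v); that is, modulo v, the integers a·r − b·(c − s) and c·p − d·(a − q) are mutual modular inverses. -/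
theorem dvd_mul_sub_one_of_reciprocity {R : Type*} [CommRing R] {a b c d p q r s : R}
    (hab : a * p + b * q = 1 + a * b) (hcd : c * r + d * s = 1 + c * d) :
    a * d - b * c ∣ (a * r - b * (c - s)) * (c * p - d * (a - q)) - 1 :=
  ⟨q * r - a * r - b * s + b * c + (p - b) * (c - s), by
    linear_combination (c * r - d * (c - s)) * hab + hcd⟩

theorem product_congruence_x4_y4
    (a b c d p q r s : ℤ)
    (hab : a * p + b * q = 1 + a * b)
    (hcd : c * r + d * s = 1 + c * d) :
    (a * r - b * (c - s)) * (c * p - d * (a - q)) ≡ 1 [ZMOD a * d - b * c] :=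
  (Int.modEq_iff_dvd.mpr (dvd_mul_sub_one_of_reciprocity hab hcd)).symm
end

section
/- Let a, b, c, d, p, q, r, s be integers with a, b, c, d > 0, a·p + b·q = 1 + a·b, c·r + d·s = 1 + c·d, 1 ≤ q ≤ a − 1 and 1 ≤ p ≤ b − 1. Set u = a·c + b·d, x₁ = a·s + b·(d − r) and y₁ = c·(a − q) + d·p. Then 1 ≤ y₁ ≤ u − 1 and x₁·y₁ ≡ 1 (mod u); that is, y₁ is the modular inverse of x₁ modulo u. -/
/-!
The reciprocity relations say that `!![a, b; a - q, p]` and `!![s, c; d - r, d]` have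
determinant `1`. Their product is `!![x₁, u; z, y₁]` with `z = (a - q) s + p (d - r)`, so
`x₁ y₁ - u z = 1`. The range of `y₁` follows from `1 ≤ a - q ≤ a - 1` and `1 ≤ p ≤ b - 1`.
-/

theorem Int.mul_modEq_one_of_mul_sub_mul_eq_one {x y u z : ℤ} (h : x * y - u * z = 1) :
    x * y ≡ 1 [ZMOD u] :=
  (Int.modEq_iff_add_fac.mpr ⟨z, by linarith⟩).symm

theorem Int.one_le_mul_add_mul_le_sub_one {a b c d m n : ℤ} (hc : 0 < c) (hd : 0 < d)
    (hm : 1 ≤ m ∧ m ≤ a - 1) (hn : 1 ≤ n ∧ n ≤ b - 1) :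
    1 ≤ c * m + d * n ∧ c * m + d * n ≤ (a * c + b * d) - 1 := by
  have hcm : c ≤ c * m := le_mul_of_one_le_right hc.le hm.1
  have hdn : d ≤ d * n := le_mul_of_one_le_right hd.le hn.1
  have hcm' : c * m ≤ c * (a - 1) := mul_le_mul_of_nonneg_left hm.2 hc.le
  have hdn' : d * n ≤ d * (b - 1) := mul_le_mul_of_nonneg_left hn.2 hd.le
  constructor <;> linarith

theorem inverse_in_range_positive_case_general
    (a b c d p q r s : ℤ)
    (hc : 0 < c) (hd : 0 < d)
    (hab : a * p + b * q = 1 + a * b)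
    (hcd : c * r + d * s = 1 + c * d)
    (hq : 1 ≤ q ∧ q ≤ a - 1) (hp : 1 ≤ p ∧ p ≤ b - 1) :
    1 ≤ c * (a - q) + d * p ∧ c * (a - q) + d * p ≤ (a * c + b * d) - 1 ∧
    (a * s + b * (d - r)) * (c * (a - q) + d * p) ≡ 1 [ZMOD a * c + b * d] := by
  have haq : 1 ≤ a - q ∧ a - q ≤ a - 1 := by omega
  obtain ⟨hlow, hhigh⟩ := Int.one_le_mul_add_mul_le_sub_one hc hd haq hp
  refine ⟨hlow, hhigh, ?_⟩
  have hM : !![a, b; a - q, p].det = 1 := by rw [Matrix.det_fin_two_of]; linarith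
  have hN : !![s, c; d - r, d].det = 1 := by rw [Matrix.det_fin_two_of]; linarith
  have hMN := Matrix.det_mul !![a, b; a - q, p] !![s, c; d - r, d]
  rw [hM, hN, Matrix.mul_fin_two, Matrix.det_fin_two_of] at hMN
  apply Int.mul_modEq_one_of_mul_sub_mul_eq_one (z := (a - q) * s + p * (d - r))
  linear_combination hMN

theorem inverse_in_range_positive_case
    (a b c d p q r s : ℤ)
    (ha : 0 < a) (hb : 0 < b) (hc : 0 < c) (hd : 0 < d)
    (hab : a * p + b * q = 1 + a * b)
    (hcd : c * r + d * s = 1 + c * d)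
    (hq : 1 ≤ q ∧ q ≤ a - 1) (hp : 1 ≤ p ∧ p ≤ b - 1) :
    1 ≤ c * (a - q) + d * p ∧ c * (a - q) + d * p ≤ (a * c + b * d) - 1 ∧
    (a * s + b * (d - r)) * (c * (a - q) + d * p) ≡ 1 [ZMOD a * c + b * d] :=
  inverse_in_range_positive_case_general a b c d p q r s hc hd hab hcd hq hp
end

section
/- Let a, b, c, d, p, q, r, s, w be integers satisfying a·p + b·q = 1 + a·b and c·r + d·s = 1 + c·d, and set u = a·c + b·d and v = a·d − b·c. If v·w ≡ 1 (mod u), then (a² + b²)·(c·(a − q) + d·p)·w ≡ 1 (mod u); that is, (c·(a − q) + d·p)·w represents the modular inverse of a² + b² modulo u. -/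
/-! With `x = a - q` the reciprocity relation `a p + b q = 1 + a b` reads `a p - b x = 1`, and the
two-square identity `(a² + b²)(c x + d y) = (a d - b c)(a y - b x) + (a c + b d)(a x + b y)` gives
`(a² + b²)(c x + d p) ≡ a d - b c` modulo `u = a c + b d`; multiplying by `w` finishes. -/

theorem Int.sq_add_sq_mul_modEq (a b c d x y : ℤ) :
    (a ^ 2 + b ^ 2) * (c * x + d * y) ≡ (a * d - b * c) * (a * y - b * x) [ZMOD a * c + b * d] :=
  Int.modEq_iff_dvd.mpr ⟨-(a * x + b * y), by ring⟩

theorem inverse_of_sum_of_squares_ab_mod_u_general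
    (a b c d p q w : ℤ)
    (hab : a * p + b * q = 1 + a * b)
    (hw : (a * d - b * c) * w ≡ 1 [ZMOD a * c + b * d]) :
    (a ^ 2 + b ^ 2) * ((c * (a - q) + d * p) * w) ≡ 1 [ZMOD a * c + b * d] := by
  have hunit : a * p - b * (a - q) = 1 := by linear_combination hab
  calc (a ^ 2 + b ^ 2) * ((c * (a - q) + d * p) * w)
      = (a ^ 2 + b ^ 2) * (c * (a - q) + d * p) * w := by ring
    _ ≡ (a * d - b * c) * (a * p - b * (a - q)) * w [ZMOD a * c + b * d] :=
      (Int.sq_add_sq_mul_modEq a b c d (a - q) p).mul_right w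
    _ = (a * d - b * c) * w := by rw [hunit, mul_one]
    _ ≡ 1 [ZMOD a * c + b * d] := hw

theorem inverse_of_sum_of_squares_ab_mod_u
    (a b c d p q r s w : ℤ)
    (hab : a * p + b * q = 1 + a * b)
    (hcd : c * r + d * s = 1 + c * d)
    (hw : (a * d - b * c) * w ≡ 1 [ZMOD a * c + b * d]) :
    (a ^ 2 + b ^ 2) * ((c * (a - q) + d * p) * w) ≡ 1 [ZMOD a * c + b * d] :=
  inverse_of_sum_of_squares_ab_mod_u_general a b c d p q w hab hw
end

section
/- Let a, b, c, d, p, q, r, s, w be integers satisfying a·p + b·q = 1 + a·b and c·r + d·s = 1 + c·d, and set u = a·c + b·d and v = a·d − b·c. If v·w ≡ 1 (mod u), then (c² + d²)·(a·s + b·(d − r))·w ≡ 1 (mod u); that is, (a·s + b·(d − r))·w represents the modular inverse of c² + d² modulo u. -/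
/-! The relation `c r + d s = 1 + c d` lets one write `a d - b c = (a d - b c)(c r + d s - c d)`;
expanding, `(c² + d²)(a s + b (d - r))` and `a d - b c` differ by `u (c s - d r + d²)`. Hence `(a s + b (d - r)) w` inverts `c² + d²`
whenever `w` inverts `v = a d - b c`. -/

theorem sq_add_sq_mul_modEq_of_mul_add_mul_eq {a b c d r s : ℤ}
    (hcd : c * r + d * s = 1 + c * d) :
    (c ^ 2 + d ^ 2) * (a * s + b * (d - r)) ≡ a * d - b * c [ZMOD a * c + b * d] :=
  (Int.modEq_iff_dvd.mpr ⟨c * s - d * r + d ^ 2, by linear_combination (a * d - b * c) * hcd⟩).symm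

theorem inverse_of_sum_of_squares_cd_mod_u_general
    (a b c d r s w : ℤ)
    (hcd : c * r + d * s = 1 + c * d)
    (hw : (a * d - b * c) * w ≡ 1 [ZMOD a * c + b * d]) :
    (c ^ 2 + d ^ 2) * ((a * s + b * (d - r)) * w) ≡ 1 [ZMOD a * c + b * d] := by
  rw [← mul_assoc]
  exact ((sq_add_sq_mul_modEq_of_mul_add_mul_eq hcd).mul_right w).trans hw

theorem inverse_of_sum_of_squares_cd_mod_u
    (a b c d p q r s w : ℤ)
    (hab : a * p + b * q = 1 + a * b)
    (hcd : c * r + d * s = 1 + c * d)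
    (hw : (a * d - b * c) * w ≡ 1 [ZMOD a * c + b * d]) :
    (c ^ 2 + d ^ 2) * ((a * s + b * (d - r)) * w) ≡ 1 [ZMOD a * c + b * d] :=
  inverse_of_sum_of_squares_cd_mod_u_general a b c d r s w hcd hw
end

section
/- Let a, b, c, d, p, q, r, s, w be integers satisfying a·p + b·q = 1 + a·b and c·r + d·s = 1 + c·d, and set u = a·c + b·d and v = a·d − b·c. If u·w ≡ 1 (mod v), then (a² + b²)·(c·p − d·(a − q))·w ≡ 1 (mod v); that is, (c·p − d·(a − q))·w represents the modular inverse of a² + b² modulo v. -/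
/-!
Write `u = a c + b d` and `v = a d - b c`. Modulo `v` we have `a d ≡ b c`, hence
`(a² + b²) c ≡ a u` and `(a² + b²) d ≡ b u`. Therefore
`(a² + b²) (c p - d (a - q)) ≡ u (a p + b q - a b) = u`, and multiplying by the inverse `w` of `u`
gives `1`.
-/

theorem Int.sq_add_sq_mul_modEq_left (a b c d : ℤ) :
    (a ^ 2 + b ^ 2) * c ≡ a * (a * c + b * d) [ZMOD a * d - b * c] :=
  Int.modEq_iff_dvd.mpr ⟨b, by ring⟩

theorem Int.sq_add_sq_mul_modEq_right (a b c d : ℤ) :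
    (a ^ 2 + b ^ 2) * d ≡ b * (a * c + b * d) [ZMOD a * d - b * c] :=
  Int.modEq_iff_dvd.mpr ⟨-a, by ring⟩

theorem Int.sq_add_sq_mul_modEq_of_reciprocity {a b c d p q : ℤ}
    (hab : a * p + b * q = 1 + a * b) :
    (a ^ 2 + b ^ 2) * (c * p - d * (a - q)) ≡ a * c + b * d [ZMOD a * d - b * c] :=
  calc (a ^ 2 + b ^ 2) * (c * p - d * (a - q))
      = (a ^ 2 + b ^ 2) * c * p - (a ^ 2 + b ^ 2) * d * (a - q) := by ring
    _ ≡ a * (a * c + b * d) * p - b * (a * c + b * d) * (a - q) [ZMOD a * d - b * c] :=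
      ((Int.sq_add_sq_mul_modEq_left a b c d).mul_right p).sub
        ((Int.sq_add_sq_mul_modEq_right a b c d).mul_right (a - q))
    _ = (a * c + b * d) * (a * p + b * q - a * b) := by ring
    _ = a * c + b * d := by rw [hab]; ring

theorem inverse_of_sum_of_squares_ab_mod_v_general
    (a b c d p q w : ℤ)
    (hab : a * p + b * q = 1 + a * b)
    (hw : (a * c + b * d) * w ≡ 1 [ZMOD a * d - b * c]) :
    (a ^ 2 + b ^ 2) * ((c * p - d * (a - q)) * w) ≡ 1 [ZMOD a * d - b * c] := by
  rw [← mul_assoc]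
  exact ((Int.sq_add_sq_mul_modEq_of_reciprocity hab).mul_right w).trans hw

theorem inverse_of_sum_of_squares_ab_mod_v
    (a b c d p q r s w : ℤ)
    (hab : a * p + b * q = 1 + a * b)
    (hcd : c * r + d * s = 1 + c * d)
    (hw : (a * c + b * d) * w ≡ 1 [ZMOD a * d - b * c]) :
    (a ^ 2 + b ^ 2) * ((c * p - d * (a - q)) * w) ≡ 1 [ZMOD a * d - b * c] :=
  inverse_of_sum_of_squares_ab_mod_v_general a b c d p q w hab hw
end

section
/- Let a, b, c, d, p, q, r, s be integers satisfying a·p + b·q = 1 + a·b and c·r + d·s = 1 + c·d. Set u = a·c + b·d, v = a·d − b·c, z₁ = a·(a − q) + b·p, z₂ = c·s + d·(d − r), z₃ = c·(c − s) + d·r. Then the following four identities hold: (a² + b²)·(c·(a − q) + d·p) = v + u·z₁; (c² + d²)·(a·s + b·(d − r)) = v + u·z₂; (a² + b²)·(c·p − d·(a − q)) = u − v·z₁; and (c² + d²)·(a·r − b·(c − s)) = u + v·z₃. -/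
/-!
Write `α = a + bi`, `γ = c + di` and `w = (a - q) + pi`. The reciprocity relation says exactly
that `conj α * w = z₁ + i`, so `|α|² * conj γ * w = (α * conj γ) * (conj α * w) = (u - vi)(z₁ + i)`;
the first and third identities are its real and imaginary parts. The other two are the same pair
of identities for the relation `c r + d s = 1 + c d`, read with the roles of the two pairs exchanged.
-/

theorem reciprocity_sum_sq_identities {R : Type*} [CommRing R] {a b p q : R}
    (h : a * p + b * q = 1 + a * b) (c d : R) :
    (a ^ 2 + b ^ 2) * (c * (a - q) + d * p) =
      (a * d - b * c) + (a * c + b * d) * (a * (a - q) + b * p) ∧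
    (a ^ 2 + b ^ 2) * (c * p - d * (a - q)) =
      (a * c + b * d) - (a * d - b * c) * (a * (a - q) + b * p) :=
  ⟨by linear_combination (a * d - b * c) * h, by linear_combination (a * c + b * d) * h⟩

theorem sum_of_squares_identities
    (a b c d p q r s : ℤ)
    (hab : a * p + b * q = 1 + a * b)
    (hcd : c * r + d * s = 1 + c * d) :
    (a ^ 2 + b ^ 2) * (c * (a - q) + d * p) =
      (a * d - b * c) + (a * c + b * d) * (a * (a - q) + b * p) ∧
    (c ^ 2 + d ^ 2) * (a * s + b * (d - r)) =
      (a * d - b * c) + (a * c + b * d) * (c * s + d * (d - r)) ∧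
    (a ^ 2 + b ^ 2) * (c * p - d * (a - q)) =
      (a * c + b * d) - (a * d - b * c) * (a * (a - q) + b * p) ∧
    (c ^ 2 + d ^ 2) * (a * r - b * (c - s)) =
      (a * c + b * d) + (a * d - b * c) * (c * (c - s) + d * r) := by
  obtain ⟨h₁, h₃⟩ := reciprocity_sum_sq_identities hab c d
  have h₂ := (reciprocity_sum_sq_identities (a := d) (b := c) (p := s) (q := r)
    (by linear_combination hcd) b a).1
  have h₄ := (reciprocity_sum_sq_identities hcd a b).2
  exact ⟨h₁, by linear_combination h₂, h₃, by linear_combination h₄⟩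
end
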